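/- Let n ≥ 1, 1 < p < ∞, 0 < α < n/p, let σ be a nonnegative Radon measure on ℝⁿ, let R > 0, and let σ' denote the restriction of σ to the complement of the ball B(0,2R). Then for every y ∈ B(0,R) one has W_{α,p}σ'(y) ≤ 2^{(n−αp)/(p−1)} ∫_R^∞ (σ(B(0,t))/t^{n−αp})^{1/(p−1)} dt/t. -/

import Mathlib

open MeasureTheory Metric Set ENNReal

noncomputable section

/-- Euclidean space `ℝⁿ`. -/
abbrev Rn (n : ℕ) := EuclideanSpace ℝ (Fin n)

/-- The Wolff potential `W_{α,p}μ(x) = ∫₀^∞ (μ(B(x,t))/t^{n−αp})^{1/(p−1)} dt/t`. -/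
def wolff (n : ℕ) (α p : ℝ) (μ : Measure (Rn n)) (x : Rn n) : ℝ≥0∞ :=
  ∫⁻ t in Ioi (0 : ℝ),
    (μ (ball x t) / ENNReal.ofReal (t ^ ((n : ℝ) - α * p))) ^ (1 / (p - 1))
      * ENNReal.ofReal (1 / t)

/-- `γ₁ = (p−1)(p−1+q₁)/((p−1)²−q₁q₂)`. -/
def gamma1 (p q₁ q₂ : ℝ) : ℝ := (p - 1) * (p - 1 + q₁) / ((p - 1) ^ 2 - q₁ * q₂)

/-- `γ₂ = (p−1)(p−1+q₂)/((p−1)²−q₁q₂)`. -/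
def gamma2 (p q₁ q₂ : ℝ) : ℝ := (p - 1) * (p - 1 + q₂) / ((p - 1) ^ 2 - q₁ * q₂)

/-- The Riesz potential `I_β μ(x) = ∫ |x−y|^{β−n} dμ(y)`. -/
def riesz (n : ℕ) (β : ℝ) (μ : Measure (Rn n)) (x : Rn n) : ℝ≥0∞ :=
  ∫⁻ y, ENNReal.ofReal (‖x - y‖ ^ (β - (n : ℝ))) ∂μ

/-- The `(α,p)`-capacity of a set `E ⊆ ℝⁿ`. -/
def capacity (n : ℕ) (α p : ℝ) (E : Set (Rn n)) : ℝ≥0∞ :=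
  ⨅ (f : Rn n → ℝ≥0∞) (_ : Measurable f)
    (_ : ∀ x ∈ E, 1 ≤ riesz n α (volume.withDensity f) x),
    ∫⁻ x, f x ^ p

/-- Condition (F): `∫₁^∞ (σ(B(0,t))/t^{n−αp})^{1/(p−1)} dt/t < ∞`. -/
def condF (n : ℕ) (α p : ℝ) (σ : Measure (Rn n)) : Prop :=
  ∫⁻ t in Ioi (1 : ℝ),
    (σ (ball (0 : Rn n) t) / ENNReal.ofReal (t ^ ((n : ℝ) - α * p))) ^ (1 / (p - 1))
      * ENNReal.ofReal (1 / t) < ∞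

/-- Condition (C): `σ(E) ≤ C_σ · cap_{α,p}(E)` for all compact sets `E`. -/
def condC (n : ℕ) (α p Cσ : ℝ) (σ : Measure (Rn n)) : Prop :=
  ∀ E : Set (Rn n), IsCompact E → σ E ≤ ENNReal.ofReal Cσ * capacity n α p E

/-- `u ∈ L^s_loc(ℝⁿ, dσ)`: `∫_B u^s dσ < ∞` for every ball `B`. -/
def locIn (n : ℕ) (σ : Measure (Rn n)) (s : ℝ) (u : Rn n → ℝ≥0∞) : Prop :=
  ∀ (x : Rn n) (r : ℝ), ∫⁻ y in ball x r, u y ^ s ∂σ < ∞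

/-- `(u,v)` is a solution of the Wolff integral system. -/
def isWolffSol (n : ℕ) (α p q₁ q₂ : ℝ) (σ : Measure (Rn n))
    (u v : Rn n → ℝ≥0∞) : Prop :=
  Measurable u ∧ Measurable v ∧ locIn n σ q₂ u ∧ locIn n σ q₁ v ∧
  (∀ᵐ x ∂σ, u x = wolff n α p (σ.withDensity fun y => v y ^ q₁) x) ∧
  (∀ᵐ x ∂σ, v x = wolff n α p (σ.withDensity fun y => u y ^ q₂) x)

/-- `(u,v)` is a supersolution of the Wolff integral system. -/
def isWolffSuper (n : ℕ) (α p q₁ q₂ : ℝ) (σ : Measure (Rn n))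
    (u v : Rn n → ℝ≥0∞) : Prop :=
  Measurable u ∧ Measurable v ∧ locIn n σ q₂ u ∧ locIn n σ q₁ v ∧
  (∀ᵐ x ∂σ, wolff n α p (σ.withDensity fun y => v y ^ q₁) x ≤ u x) ∧
  (∀ᵐ x ∂σ, wolff n α p (σ.withDensity fun y => u y ^ q₂) x ≤ v x)

/-- `(u,v)` is nontrivial: neither `u` nor `v` vanishes `σ`-a.e. -/
def nontrivialPair (n : ℕ) (σ : Measure (Rn n)) (u v : Rn n → ℝ≥0∞) : Prop :=
  ¬ (∀ᵐ x ∂σ, u x = 0) ∧ ¬ (∀ᵐ x ∂σ, v x = 0)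

/-- Condition (W_λ). -/
def condW (n : ℕ) (α p q₁ q₂ lam : ℝ) (σ : Measure (Rn n)) : Prop :=
  ∀ᵐ x ∂(volume : Measure (Rn n)),
    (wolff n α p (σ.withDensity fun y => (wolff n α p σ y) ^ (gamma2 p q₁ q₂ * q₁)) x
      ≤ ENNReal.ofReal lam *
        (wolff n α p σ x + (wolff n α p σ x) ^ gamma1 p q₁ q₂)) ∧
    (wolff n α p (σ.withDensity fun y => (wolff n α p σ y) ^ (gamma1 p q₁ q₂ * q₂)) x
      ≤ ENNReal.ofReal lam *
        (wolff n α p σ x + (wolff n α p σ x) ^ gamma2 p q₁ q₂)) ∧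
    (wolff n α p σ x + (wolff n α p σ x) ^ gamma1 p q₁ q₂ < ∞) ∧
    (wolff n α p σ x + (wolff n α p σ x) ^ gamma2 p q₁ q₂ < ∞)

/-! For `y ∈ B(0,R)` the ball `B(y,t)` lies inside `B(0,2R)` when `t ≤ R`, and inside `B(0,2t)`
when `t > R`. So the integrand of the restricted potential vanishes on `(0,R]` and is at most
`(σ(B(0,2t))/t^{n−αp})^{1/(p−1)}` beyond. The substitution `s = 2t` preserves `dt/t`, turns
`t^{n−αp}` into `2^{−(n−αp)} s^{n−αp}`, and leaves an integral over `(2R,∞) ⊆ (R,∞)`. -/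

theorem setLIntegral_Ioi_comp_mul_left (f : ℝ → ℝ≥0∞) {a : ℝ} (ha : 0 < a) (c : ℝ) :
    ∫⁻ t in Ioi c, f (a * t) = ENNReal.ofReal a⁻¹ * ∫⁻ s in Ioi (a * c), f s := by
  have hemb : MeasurableEmbedding (a * ·) := (Homeomorph.mulLeft₀ a ha.ne').measurableEmbedding
  have hpre : (a * ·) ⁻¹' Ioi (a * c) = Ioi c := by
    ext t; simp [mul_lt_mul_iff_right₀ ha]
  calc ∫⁻ t in Ioi c, f (a * t)
      = ∫⁻ s in Ioi (a * c), f s ∂(volume.map (a * ·)) := by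
        rw [hemb.restrict_map, hemb.lintegral_map, hpre]
    _ = ENNReal.ofReal a⁻¹ * ∫⁻ s in Ioi (a * c), f s := by
        rw [Real.map_volume_mul_left ha.ne', abs_of_pos (inv_pos.2 ha), Measure.restrict_smul,
          lintegral_smul_measure, smul_eq_mul]

theorem setLIntegral_Ioi_comp_mul_left_mul_one_div (f : ℝ → ℝ≥0∞) {a : ℝ} (ha : 0 < a) (c : ℝ) :
    ∫⁻ t in Ioi c, f (a * t) * ENNReal.ofReal (1 / t) =
      ∫⁻ s in Ioi (a * c), f s * ENNReal.ofReal (1 / s) := by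
  have hscale (t : ℝ) : f (a * t) * ENNReal.ofReal (1 / t) =
      ENNReal.ofReal a * (f (a * t) * ENNReal.ofReal (1 / (a * t))) := by
    rw [mul_left_comm, ← ENNReal.ofReal_mul ha.le, mul_one_div, div_mul_cancel_left₀ ha.ne',
      one_div]
  simp_rw [hscale]
  rw [lintegral_const_mul' _ _ ofReal_ne_top,
    setLIntegral_Ioi_comp_mul_left (fun s => f s * ENNReal.ofReal (1 / s)) ha, ← mul_assoc,
    ← ENNReal.ofReal_mul ha.le, mul_inv_cancel₀ ha.ne', ENNReal.ofReal_one, one_mul]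

theorem setLIntegral_Ioi_le_of_eqOn_zero {f g : ℝ → ℝ≥0∞} {a b : ℝ} (hab : a ≤ b)
    (hzero : EqOn f 0 (Ioc a b)) (hle : ∀ t ∈ Ioi b, f t ≤ g t) :
    ∫⁻ t in Ioi a, f t ≤ ∫⁻ t in Ioi b, g t := by
  calc ∫⁻ t in Ioi a, f t
      ≤ ∫⁻ t in Ioi a, (Ioi b).indicator g t := by
        refine setLIntegral_mono_ae' measurableSet_Ioi (ae_of_all _ fun t ht => ?_)
        by_cases htb : t ∈ Ioi b
        · simpa [indicator_of_mem htb] using hle t htb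
        · simp [indicator_of_notMem htb, hzero ⟨ht, not_lt.1 htb⟩]
    _ = ∫⁻ t in Ioi b, g t := by
        rw [lintegral_indicator measurableSet_Ioi, Measure.restrict_restrict measurableSet_Ioi,
          inter_eq_self_of_subset_left (Ioi_subset_Ioi hab)]

theorem restrict_compl_ball_two_mul_ball_eq_zero {X : Type*} [PseudoMetricSpace X]
    [MeasurableSpace X] [OpensMeasurableSpace X] (μ : Measure X) {x y : X} {R t : ℝ}
    (hy : dist y x < R) (ht : t ≤ R) : μ.restrict (ball x (2 * R))ᶜ (ball y t) = 0 := by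
  have hsub : ball y t ⊆ ball x (2 * R) := ball_subset_ball' (by linarith)
  rw [Measure.restrict_apply measurableSet_ball, ← sdiff_eq, sdiff_eq_empty.2 hsub, measure_empty]

def wolffIntegrand (β q : ℝ) (m : ℝ≥0∞) (t : ℝ) : ℝ≥0∞ :=
  (m / ENNReal.ofReal (t ^ β)) ^ q

theorem wolff_eq_setLIntegral_wolffIntegrand (n : ℕ) (α p : ℝ) (μ : Measure (Rn n)) (x : Rn n) :
    wolff n α p μ x = ∫⁻ t in Ioi 0,
      wolffIntegrand ((n : ℝ) - α * p) (1 / (p - 1)) (μ (ball x t)) t * ENNReal.ofReal (1 / t) :=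
  rfl

theorem wolffIntegrand_zero_left (β : ℝ) {q : ℝ} (hq : 0 < q) (t : ℝ) :
    wolffIntegrand β q 0 t = 0 := by
  rw [wolffIntegrand, ENNReal.zero_div, ENNReal.zero_rpow_of_pos hq]

theorem wolffIntegrand_mono_left (β : ℝ) {q : ℝ} (hq : 0 ≤ q) (t : ℝ) {m m' : ℝ≥0∞}
    (h : m ≤ m') : wolffIntegrand β q m t ≤ wolffIntegrand β q m' t :=
  ENNReal.rpow_le_rpow (ENNReal.div_le_div_right h _) hq

theorem wolffIntegrand_eq_mul_wolffIntegrand_mul (β : ℝ) {q : ℝ} (hq : 0 ≤ q) (m : ℝ≥0∞)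
    {a t : ℝ} (ha : 0 < a) (ht : 0 ≤ t) :
    wolffIntegrand β q m t = ENNReal.ofReal (a ^ (β * q)) * wolffIntegrand β q m (a * t) := by
  have haβ : 0 < a ^ β := Real.rpow_pos_of_pos ha β
  have hA : ENNReal.ofReal (a ^ β) ≠ 0 := (ENNReal.ofReal_pos.2 haβ).ne'
  rw [wolffIntegrand, wolffIntegrand, Real.rpow_mul ha.le, ← ENNReal.ofReal_rpow_of_pos haβ,
    ← ENNReal.mul_rpow_of_nonneg _ _ hq, Real.mul_rpow ha.le ht, ENNReal.ofReal_mul haβ.le,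
    ← mul_div_assoc, ENNReal.mul_div_mul_left _ _ hA ofReal_ne_top]

theorem wolff_restrict_compl_ball_le (n : ℕ) (α : ℝ) {p : ℝ} (hp : 1 < p) (σ : Measure (Rn n))
    {x y : Rn n} {R : ℝ} (hy : dist y x < R) :
    wolff n α p (σ.restrict (ball x (2 * R))ᶜ) y ≤ ∫⁻ t in Ioi R,
      wolffIntegrand ((n : ℝ) - α * p) (1 / (p - 1)) (σ (ball x (2 * t))) t *
        ENNReal.ofReal (1 / t) := by
  have hq : 0 < 1 / (p - 1) := one_div_pos.2 (sub_pos.2 hp)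
  rw [wolff_eq_setLIntegral_wolffIntegrand]
  refine setLIntegral_Ioi_le_of_eqOn_zero (dist_nonneg.trans hy.le) (fun t ht => ?_)
    (fun t ht => ?_)
  · rw [restrict_compl_ball_two_mul_ball_eq_zero σ hy ht.2, wolffIntegrand_zero_left _ hq,
      zero_mul, Pi.zero_apply]
  · have hball : ball y t ⊆ ball x (2 * t) := ball_subset_ball' (by linarith [mem_Ioi.1 ht])
    gcongr
    exact wolffIntegrand_mono_left _ hq.le _
      ((Measure.restrict_apply_le _ _).trans (measure_mono hball))

theorem wolff_restrict_tail_bound_general (n : ℕ) (p α : ℝ) (hp : 1 < p) (σ : Measure (Rn n)) (R : ℝ) :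
    ∀ y ∈ ball (0 : Rn n) R,
      wolff n α p (σ.restrict ((ball (0 : Rn n) (2 * R))ᶜ)) y ≤
        ENNReal.ofReal (2 ^ (((n : ℝ) - α * p) / (p - 1))) *
          ∫⁻ t in Ioi R,
            (σ (ball (0 : Rn n) t) / ENNReal.ofReal (t ^ ((n : ℝ) - α * p)))
              ^ (1 / (p - 1)) * ENNReal.ofReal (1 / t) := by
  intro y hy
  have hR : 0 < R := dist_nonneg.trans_lt hy
  have hq : 0 ≤ 1 / (p - 1) := (one_div_pos.2 (sub_pos.2 hp)).le
  set β := (n : ℝ) - α * p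
  set W := fun s => wolffIntegrand β (1 / (p - 1)) (σ (ball (0 : Rn n) s)) s
  calc wolff n α p (σ.restrict ((ball (0 : Rn n) (2 * R))ᶜ)) y
      ≤ ∫⁻ t in Ioi R,
          wolffIntegrand β (1 / (p - 1)) (σ (ball 0 (2 * t))) t * ENNReal.ofReal (1 / t) :=
        wolff_restrict_compl_ball_le n α hp σ (mem_ball.1 hy)
    _ = ENNReal.ofReal (2 ^ (β / (p - 1))) *
          ∫⁻ t in Ioi R, W (2 * t) * ENNReal.ofReal (1 / t) := by
        rw [← lintegral_const_mul' _ _ ofReal_ne_top, ← mul_one_div β]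
        refine setLIntegral_congr_fun measurableSet_Ioi fun t ht => ?_
        rw [wolffIntegrand_eq_mul_wolffIntegrand_mul β hq _ two_pos (hR.trans ht).le, mul_assoc]
    _ = ENNReal.ofReal (2 ^ (β / (p - 1))) *
          ∫⁻ t in Ioi (2 * R), W t * ENNReal.ofReal (1 / t) := by
        rw [setLIntegral_Ioi_comp_mul_left_mul_one_div W two_pos]
    _ ≤ ENNReal.ofReal (2 ^ (β / (p - 1))) * ∫⁻ t in Ioi R, W t * ENNReal.ofReal (1 / t) := by
        gcongr _ * ?_
        exact lintegral_mono_set (Ioi_subset_Ioi (by linarith))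

/-- Tail estimate in the proof of Lemma 3.4: the Wolff potential of the restriction of `σ`
to the complement of `B(0,2R)` is uniformly bounded on `B(0,R)`. -/
theorem wolff_restrict_tail_bound (n : ℕ) (hn : 1 ≤ n) (p α : ℝ)
    (hp : 1 < p) (hα : 0 < α) (hαn : α < (n : ℝ) / p)
    (σ : Measure (Rn n)) (hσ : IsLocallyFiniteMeasure σ) (R : ℝ) (hR : 0 < R) :
    ∀ y ∈ ball (0 : Rn n) R,
      wolff n α p (σ.restrict ((ball (0 : Rn n) (2 * R))ᶜ)) y ≤
        ENNReal.ofReal (2 ^ (((n : ℝ) - α * p) / (p - 1))) *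
          ∫⁻ t in Ioi R,
            (σ (ball (0 : Rn n) t) / ENNReal.ofReal (t ^ ((n : ℝ) - α * p)))
              ^ (1 / (p - 1)) * ENNReal.ofReal (1 / t) :=
  wolff_restrict_tail_bound_general n p α hp σ R
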